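/- Let b be an integer that is not a perfect cube (in particular b ≠ 0), let K be any quadratic field, and let E be the elliptic curve y² = x³ + b² over K. Then E(K) contains no point of order 2. -/

import Mathlib

/-- The Weierstrass curve `y² = x³ + a` over `K`, i.e. with coefficients
`a₁ = a₂ = a₃ = a₄ = 0`, `a₆ = a`. -/
def curveE {K : Type*} [Field K] (a : K) : WeierstrassCurve K :=
  ⟨0, 0, 0, 0, a⟩

/-!
A point of order `2` on `y² = x³ + b²` has `y = 0`, so its abscissa `x ∈ K` satisfies
`x³ = -b²`. If `-b²` were not a cube in `ℚ`, then `X³ + b²` would be irreducible over `ℚ`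
and `x` would have degree `3`, which does not divide `[K : ℚ] = 2`. So `-b² = r³`, i.e.
`b² = (-r)³`, for some `r ∈ ℚ`; as `2` and `3` are coprime, `b` is then the cube of a
rational number, which is an integer because `ℤ` is integrally closed.
-/

open Polynomial

lemma exists_pow_eq_of_not_dvd_finrank {F L : Type*} [Field F] [Field L] [Algebra F L]
    [FiniteDimensional F L] {p : ℕ} (hp : p.Prime) (hpL : ¬ p ∣ Module.finrank F L)
    {x : L} {a : F} (hx : x ^ p = algebraMap F L a) : ∃ r : F, r ^ p = a := by
  by_contra! ha
  have hmin : minpoly F x = X ^ p - C a :=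
    (minpoly.eq_of_irreducible_of_monic (X_pow_sub_C_irreducible_of_prime hp ha)
      (by simp [hx]) (monic_X_pow_sub_C a hp.ne_zero)).symm
  have hdvd := minpoly.degree_dvd (IsIntegral.of_finite F x)
  rw [hmin, natDegree_X_pow_sub_C] at hdvd
  exact hpL hdvd

lemma Int.exists_eq_pow_three_of_sq_eq_rat_cube {b : ℤ} {r : ℚ} (h : (b : ℚ) ^ 2 = r ^ 3) :
    ∃ c : ℤ, b = c ^ 3 := by
  obtain ⟨c, hc, -⟩ := (pow_eq_pow_iff_of_coprime (by norm_num : Nat.Coprime 2 3)).mp h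
  have hint : IsIntegral ℤ (c ^ 3) := hc ▸ isIntegral_algebraMap (x := b)
  obtain ⟨d, hd⟩ := IsIntegrallyClosed.exists_algebraMap_eq_of_isIntegral_pow three_pos hint
  refine ⟨d, Int.cast_injective (α := ℚ) ?_⟩
  rw [hc, ← hd, Int.cast_pow, algebraMap_int_eq, eq_intCast]

namespace WeierstrassCurve.Affine.Point

variable {F : Type*} [Field F] [DecidableEq F] {W : WeierstrassCurve.Affine F}

lemma Y_eq_negY_of_addOrderOf_eq_two {x y : F} {h : W.Nonsingular x y}
    (hP : addOrderOf (some x y h) = 2) : y = W.negY x y := by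
  by_contra hy
  have h2 : some x y h + some x y h = 0 := by
    rw [← two_nsmul, ← hP, addOrderOf_nsmul_eq_zero]
  exact some_ne_zero _ ((add_self_of_Y_ne hy).symm.trans h2)

end WeierstrassCurve.Affine.Point

lemma curveE_exists_pow_three_eq_neg_of_addOrderOf_eq_two {K : Type*} [Field K] [DecidableEq K]
    [NeZero (2 : K)] {a : K} {P : (curveE a).toAffine.Point} (hP : addOrderOf P = 2) :
    ∃ x : K, x ^ 3 = -a := by
  rcases P with _ | @⟨x, y, h⟩
  · rw [← WeierstrassCurve.Affine.Point.zero_def, addOrderOf_zero] at hP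
    omega
  have hy : y = -y := by
    have := WeierstrassCurve.Affine.Point.Y_eq_negY_of_addOrderOf_eq_two hP
    simpa [curveE, WeierstrassCurve.Affine.negY] using this
  have hy0 : y = 0 :=
    (mul_eq_zero.mp (by linear_combination hy : (2 : K) * y = 0)).resolve_left two_ne_zero
  have heq := ((WeierstrassCurve.Affine.nonsingular_iff x y).mp h).1
  rw [WeierstrassCurve.Affine.equation_iff] at heq
  refine ⟨x, ?_⟩
  simp only [curveE, hy0] at heq
  linear_combination -heq

open Classical in
/-- Let `b` be an integer that is not a perfect cube (in particular `b ≠ 0`), let `K`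
be any quadratic field, and let `E` be the elliptic curve `y² = x³ + b²` over `K`.
Then `E(K)` contains no point of order `2`. -/
theorem no_order_two_point (b : ℤ) (hb : ∀ c : ℤ, b ≠ c ^ 3) (K : Type*) [Field K]
    [NumberField K] (hK : Module.finrank ℚ K = 2) :
    ∀ P : (curveE ((b : K) ^ 2)).toAffine.Point, addOrderOf P ≠ 2 := by
  intro P hP
  obtain ⟨x, hx⟩ := curveE_exists_pow_three_eq_neg_of_addOrderOf_eq_two hP
  obtain ⟨r, hr⟩ : ∃ r : ℚ, r ^ 3 = -(b : ℚ) ^ 2 :=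
    exists_pow_eq_of_not_dvd_finrank Nat.prime_three (by rw [hK]; norm_num)
      (by rw [hx, map_neg, map_pow, map_intCast])
  obtain ⟨c, hc⟩ := Int.exists_eq_pow_three_of_sq_eq_rat_cube (r := -r)
    (by rw [Odd.neg_pow (by decide), hr, neg_neg])
  exact hb c hc
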